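/- arXiv:1703.08057 — 3 statements merged into one kernel-verified Lean document; each statement's English description precedes it below -/
import Mathlib

section
/- With notation as in the PageRank setup, the error vector ε = π - π̄, where π = (1-α)D^{1/2}(I - αQ)⁻¹D^{-1/2}v and π̄ = α d/vol(G) + (1-α)v, equals (1-α) D^{1/2} (Σ_{i≥2} (αλᵢ/(1-αλᵢ)) uᵢuᵢᵀ) D^{-1/2} v, where u₁ = D^{1/2}𝟙/√vol(G) and u₂,…,uₙ complete an orthonormal eigenbasis of Q with eigenvalues λ₂,…,λₙ. -/
/-! With `(uᵢ)` orthonormal, `∑ᵢ uᵢuᵢᵀ = 1`, so functions of `Q = ∑ᵢ λᵢ uᵢuᵢᵀ` act on the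
eigenvalues: `(1 - αQ)⁻¹ = ∑ᵢ (1 - αλᵢ)⁻¹ uᵢuᵢᵀ = 1 + ∑ᵢ αλᵢ/(1 - αλᵢ) uᵢuᵢᵀ`. The identity term
contributes `(1 - α)v`, and the `λ₁ = 1` term, conjugated by `D^{1/2}`, sends the probability
vector `v` to `α/(1 - α) · d/vol`; together they are exactly `π̄`. -/

open Matrix Finset

section OrthonormalFamily

variable {ι R : Type*} [Fintype ι] [CommRing R] {u : ι → ι → R}

def spectralSum (u : ι → ι → R) (f : ι → R) : Matrix ι ι R :=
  ∑ i, f i • vecMulVec (u i) (u i)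

theorem spectralSum_add (f g : ι → R) :
    spectralSum u (f + g) = spectralSum u f + spectralSum u g := by
  simp only [spectralSum, Pi.add_apply, add_smul, sum_add_distrib]

theorem spectralSum_sub (f g : ι → R) :
    spectralSum u (f - g) = spectralSum u f - spectralSum u g := by
  simp only [spectralSum, Pi.sub_apply, sub_smul, sum_sub_distrib]

theorem spectralSum_smul (c : R) (f : ι → R) :
    spectralSum u (c • f) = c • spectralSum u f := by
  simp only [spectralSum, Pi.smul_apply, smul_eq_mul, mul_smul, smul_sum]

variable [DecidableEq ι] (hu : ∀ i j, u i ⬝ᵥ u j = if i = j then 1 else 0)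
include hu

theorem sum_vecMulVec_self_eq_one : ∑ i, vecMulVec (u i) (u i) = 1 := by
  have hrows : of u * (of u)ᵀ = 1 := by
    ext i j
    simpa [mul_apply, dotProduct, one_apply] using hu i j
  have hcols : (of u)ᵀ * of u = 1 := mul_eq_one_comm.mp hrows
  ext a b
  simpa [Matrix.sum_apply, vecMulVec_apply, mul_apply] using congr_fun₂ hcols a b

theorem vecMulVec_self_mul_vecMulVec_self (i j : ι) :
    vecMulVec (u i) (u i) * vecMulVec (u j) (u j) =
      if i = j then vecMulVec (u i) (u i) else 0 := by
  rw [vecMulVec_mul_vecMulVec, hu]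
  split_ifs with h
  · rw [h, one_smul]
  · rw [zero_smul, vecMulVec_zero]

theorem spectralSum_one : spectralSum u 1 = 1 := by
  simpa [spectralSum] using sum_vecMulVec_self_eq_one hu

theorem spectralSum_mul_spectralSum (f g : ι → R) :
    spectralSum u f * spectralSum u g = spectralSum u (f * g) := by
  simp only [spectralSum, sum_mul, mul_sum, smul_mul_smul, vecMulVec_self_mul_vecMulVec_self hu,
    smul_ite, smul_zero, sum_ite_eq', mem_univ, if_true, Pi.mul_apply]

end OrthonormalFamily

section Resolvent

variable {ι K : Type*} [Fintype ι] [DecidableEq ι] [Field K] {u : ι → ι → K}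
  (hu : ∀ i j, u i ⬝ᵥ u j = if i = j then 1 else 0)
include hu

theorem inv_spectralSum {f : ι → K} (hf : ∀ i, f i ≠ 0) :
    (spectralSum u f)⁻¹ = spectralSum u f⁻¹ := by
  refine inv_eq_right_inv ?_
  rw [spectralSum_mul_spectralSum hu, ← spectralSum_one hu]
  congr 1
  funext i
  exact mul_inv_cancel₀ (hf i)

theorem inv_one_sub_smul_spectralSum {c : K} {f : ι → K} (hf : ∀ i, 1 - c * f i ≠ 0) :
    (1 - c • spectralSum u f)⁻¹ = 1 + spectralSum u (fun i => c * f i / (1 - c * f i)) :=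
  calc (1 - c • spectralSum u f)⁻¹ = (spectralSum u (1 - c • f))⁻¹ := by
        rw [spectralSum_sub, spectralSum_smul, spectralSum_one hu]
    _ = spectralSum u (1 - c • f)⁻¹ := inv_spectralSum hu hf
    _ = spectralSum u (1 + fun i => c * f i / (1 - c * f i)) := by
        congr 1
        funext i
        simp only [Pi.inv_apply, Pi.sub_apply, Pi.add_apply, Pi.one_apply, Pi.smul_apply,
          smul_eq_mul]
        field_simp [hf i]
        ring
    _ = 1 + spectralSum u (fun i => c * f i / (1 - c * f i)) := by
        rw [spectralSum_add, spectralSum_one hu]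

end Resolvent

theorem diagonal_mul_vecMulVec_mul_diagonal_mulVec {ι R : Type*} [Fintype ι] [DecidableEq ι]
    [CommSemiring R] (a x y b v : ι → R) :
    (diagonal a * vecMulVec x y * diagonal b) *ᵥ v = ((y * b) ⬝ᵥ v) • (a * x) := by
  have hax : diagonal a *ᵥ x = a * x := funext (mulVec_diagonal a x)
  have hyb : y ᵥ* diagonal b = y * b := funext (vecMul_diagonal y b)
  rw [mul_vecMulVec, vecMulVec_mul, vecMulVec_mulVec, hax, hyb, op_smul_eq_smul]

theorem sqrt_degree_conj_vecMulVec_mulVec {ι : Type*} [Fintype ι] [DecidableEq ι]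
    {d : ι → ℝ} (hd : ∀ i, 0 < d i) {vol : ℝ} (hvol : 0 ≤ vol) (v : ι → ℝ) :
    (diagonal (fun i => √(d i)) * vecMulVec (fun i => √(d i) / √vol) (fun i => √(d i) / √vol)
      * diagonal (fun i => (√(d i))⁻¹)) *ᵥ v = fun i => d i * (∑ j, v j) / vol := by
  rw [diagonal_mul_vecMulVec_mul_diagonal_mulVec]
  have hconst : ((fun i => √(d i) / √vol) * fun i => (√(d i))⁻¹) = fun _ => (√vol)⁻¹ := by
    funext j
    have hsqrt : √(d j) ≠ 0 := (Real.sqrt_pos.mpr (hd j)).ne'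
    simp only [Pi.mul_apply]
    field_simp
  funext i
  rw [hconst]
  simp only [Pi.smul_apply, Pi.mul_apply, smul_eq_mul, dotProduct, ← mul_sum]
  have hdi : √(d i) * √(d i) = d i := Real.mul_self_sqrt (hd i).le
  have hv : √vol * √vol = vol := Real.mul_self_sqrt hvol
  calc (√vol)⁻¹ * (∑ j, v j) * (√(d i) * (√(d i) / √vol))
      = √(d i) * √(d i) * (∑ j, v j) / (√vol * √vol) := by ring
    _ = d i * (∑ j, v j) / vol := by rw [hdi, hv]

theorem pagerank_error_decomposition_general {n : ℕ}
    (d : Fin n → ℝ) (hdpos : ∀ i, 0 < d i)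
    (vol : ℝ) (hvol : vol = ∑ i, d i)
    (Dhalf Dinvhalf Q : Matrix (Fin n) (Fin n) ℝ)
    (hDhalf : Dhalf = Matrix.diagonal (fun i => Real.sqrt (d i)))
    (hDinvhalf : Dinvhalf = Matrix.diagonal (fun i => (Real.sqrt (d i))⁻¹))
    (u : Fin n → (Fin n → ℝ)) (lam : Fin n → ℝ)
    (horth : ∀ i j, dotProduct (u i) (u j) = if i = j then (1 : ℝ) else 0)
    (hdecomp : Q = ∑ i, lam i • vecMulVec (u i) (u i))
    (hlam : ∀ i, |lam i| ≤ 1)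
    (i₀ : Fin n) (hu₀ : u i₀ = fun i => Real.sqrt (d i) / Real.sqrt vol)
    (hlam₀ : lam i₀ = 1)
    (α : ℝ) (hα0 : 0 < α) (hα1 : α < 1)
    (v : Fin n → ℝ) (hvsum : ∑ i, v i = 1)
    (π πbar : Fin n → ℝ)
    (hπ : π = (1 - α) • (Dhalf * (1 - α • Q)⁻¹ * Dinvhalf).mulVec v)
    (hπbar : πbar = α • (fun i => d i / vol) + (1 - α) • v) :
    π - πbar = (1 - α) • (Dhalf *
      (∑ i ∈ Finset.univ.erase i₀, (α * lam i / (1 - α * lam i)) • vecMulVec (u i) (u i))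
      * Dinvhalf).mulVec v := by
  set S := ∑ i ∈ Finset.univ.erase i₀, (α * lam i / (1 - α * lam i)) • vecMulVec (u i) (u i)
  have hvol_pos : 0 < vol := hvol ▸ sum_pos (fun i _ => hdpos i) ⟨i₀, mem_univ i₀⟩
  have hα : 1 - α ≠ 0 := sub_ne_zero.mpr hα1.ne'
  have hres : ∀ i, 1 - α * lam i ≠ 0 := fun i =>
    (sub_pos.mpr (by nlinarith [(abs_le.mp (hlam i)).2])).ne'
  have hDD : Dhalf * Dinvhalf = 1 := by
    rw [hDhalf, hDinvhalf, diagonal_mul_diagonal, ← diagonal_one]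
    exact congrArg diagonal (funext fun i => mul_inv_cancel₀ (Real.sqrt_pos.mpr (hdpos i)).ne')
  have hspike : (Dhalf * vecMulVec (u i₀) (u i₀) * Dinvhalf) *ᵥ v = fun i => d i / vol := by
    rw [hDhalf, hDinvhalf, hu₀, sqrt_degree_conj_vecMulVec_mulVec hdpos hvol_pos.le, hvsum]
    simp_rw [mul_one]
  have hsplit : (1 - α • Q)⁻¹ = 1 + (α / (1 - α)) • vecMulVec (u i₀) (u i₀) + S := by
    rw [hdecomp]
    change (1 - α • spectralSum u lam)⁻¹ = _
    rw [inv_one_sub_smul_spectralSum horth hres, spectralSum, ← add_sum_erase _ _ (mem_univ i₀),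
      hlam₀, mul_one, add_assoc]
  rw [hπ, hπbar, hsplit, mul_add, mul_add, add_mul, add_mul, mul_one, hDD, Matrix.mul_smul,
    Matrix.smul_mul, add_mulVec, add_mulVec, one_mulVec, smul_mulVec, hspike, smul_add, smul_add,
    smul_smul, mul_div_cancel₀ _ hα]
  abel

theorem pagerank_error_decomposition {n : ℕ} (A : Matrix (Fin n) (Fin n) ℝ)
    (hAsym : A.IsSymm) (h01 : ∀ i j, A i j = 0 ∨ A i j = 1)
    (d : Fin n → ℝ) (hd : ∀ i, d i = ∑ j, A i j) (hdpos : ∀ i, 0 < d i)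
    (vol : ℝ) (hvol : vol = ∑ i, d i)
    (Dhalf Dinvhalf Q : Matrix (Fin n) (Fin n) ℝ)
    (hDhalf : Dhalf = Matrix.diagonal (fun i => Real.sqrt (d i)))
    (hDinvhalf : Dinvhalf = Matrix.diagonal (fun i => (Real.sqrt (d i))⁻¹))
    (hQ : Q = Dinvhalf * A * Dinvhalf)
    (u : Fin n → (Fin n → ℝ)) (lam : Fin n → ℝ)
    (horth : ∀ i j, dotProduct (u i) (u j) = if i = j then (1 : ℝ) else 0)
    (hdecomp : Q = ∑ i, lam i • vecMulVec (u i) (u i))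
    (hlam : ∀ i, |lam i| ≤ 1)
    (i₀ : Fin n) (hu₀ : u i₀ = fun i => Real.sqrt (d i) / Real.sqrt vol)
    (hlam₀ : lam i₀ = 1)
    (α : ℝ) (hα0 : 0 < α) (hα1 : α < 1)
    (v : Fin n → ℝ) (hvnn : ∀ i, 0 ≤ v i) (hvsum : ∑ i, v i = 1)
    (π πbar : Fin n → ℝ)
    (hπ : π = (1 - α) • (Dhalf * (1 - α • Q)⁻¹ * Dinvhalf).mulVec v)
    (hπbar : πbar = α • (fun i => d i / vol) + (1 - α) • v) :
    π - πbar = (1 - α) • (Dhalf *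
      (∑ i ∈ Finset.univ.erase i₀, (α * lam i / (1 - α * lam i)) • vecMulVec (u i) (u i))
      * Dinvhalf).mulVec v :=
  pagerank_error_decomposition_general d hdpos vol hvol Dhalf Dinvhalf Q hDhalf hDinvhalf u lam
    horth hdecomp hlam i₀ hu₀ hlam₀ α hα0 hα1 v hvsum π πbar hπ hπbar
end

section
/- Under the setup of the error decomposition, the ℓ¹-norm of ε = π - π̄ satisfies ‖ε‖₁ ≤ (1-α)·√n·√(d_max/d_min)·max_{i≥2} |αλᵢ/(1-αλᵢ)|·‖v‖₂. -/
open Matrix Finset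

theorem pagerank_error_l1_bound {n : ℕ} (hn : 1 < n)
    (d : Fin n → ℝ) (hdpos : ∀ i, 0 < d i)
    (Dhalf Dinvhalf : Matrix (Fin n) (Fin n) ℝ)
    (hDhalf : Dhalf = Matrix.diagonal (fun i => Real.sqrt (d i)))
    (hDinvhalf : Dinvhalf = Matrix.diagonal (fun i => (Real.sqrt (d i))⁻¹))
    (u : Fin n → (Fin n → ℝ)) (lam : Fin n → ℝ)
    (horth : ∀ i j, dotProduct (u i) (u j) = if i = j then (1 : ℝ) else 0)
    (hlam : ∀ i, |lam i| ≤ 1)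
    (i₀ : Fin n) (hlam₀ : lam i₀ = 1)
    (α : ℝ) (hα0 : 0 < α) (hα1 : α < 1)
    (v : Fin n → ℝ) (hvnn : ∀ i, 0 ≤ v i) (hvsum : ∑ i, v i = 1)
    (ε : Fin n → ℝ)
    (hε : ε = (1 - α) • (Dhalf *
      (∑ i ∈ Finset.univ.erase i₀, (α * lam i / (1 - α * lam i)) • vecMulVec (u i) (u i))
      * Dinvhalf).mulVec v)
    (dmax dmin M : ℝ)
    (hdmax : IsGreatest (Set.range d) dmax)
    (hdmin : IsLeast (Set.range d) dmin)
    (hM : IsGreatest ((fun i => |α * lam i / (1 - α * lam i)|) '' {i | i ≠ i₀}) M) :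
    ∑ i, |ε i| ≤ (1 - α) * Real.sqrt n * Real.sqrt (dmax / dmin) * M *
      Real.sqrt (∑ i, (v i) ^ 2) := by
  -- notation
  set c : Fin n → ℝ := fun i => α * lam i / (1 - α * lam i) with hc
  set s : Finset (Fin n) := Finset.univ.erase i₀ with hs
  set w : Fin n → ℝ := Dinvhalf.mulVec v with hw
  set S : Matrix (Fin n) (Fin n) ℝ := ∑ i ∈ s, c i • vecMulVec (u i) (u i) with hS
  set y : Fin n → ℝ := S.mulVec w with hy
  -- basic positivity
  obtain ⟨i₁, hi₁⟩ := hdmax.1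
  obtain ⟨i₂, hi₂⟩ := hdmin.1
  have hdmaxpos : 0 < dmax := hi₁ ▸ hdpos i₁
  have hdminpos : 0 < dmin := hi₂ ▸ hdpos i₂
  have hMnn : 0 ≤ M := by
    obtain ⟨i, -, hi⟩ := hM.1
    rw [← hi]; positivity
  have h1α : (0:ℝ) ≤ 1 - α := by linarith
  -- ε i = (1-α) * sqrt (d i) * y i
  have h0 : (Dhalf * S * Dinvhalf) *ᵥ v = Dhalf *ᵥ y := by
    rw [hy, hw, Matrix.mulVec_mulVec, Matrix.mulVec_mulVec, Matrix.mul_assoc]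
  have hεi : ∀ i, ε i = (1 - α) * (Real.sqrt (d i) * y i) := by
    intro i
    rw [hε]
    simp only [Pi.smul_apply, smul_eq_mul, h0]
    rw [hDhalf]
    simp [Matrix.mulVec_diagonal]
  -- w j = v j / sqrt (d j)
  have hwj : ∀ j, w j = (Real.sqrt (d j))⁻¹ * v j := by
    intro j; rw [hw, hDinvhalf]; simp [Matrix.mulVec_diagonal]
  -- y j = ∑ i in s, (c i * (u i ⬝ᵥ w)) * u i j
  have hyj : ∀ j, y j = ∑ i ∈ s, (c i * (u i ⬝ᵥ w)) * u i j := by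
    intro j
    rw [hy]
    simp only [hS, mulVec, dotProduct, Matrix.sum_apply, Matrix.smul_apply, vecMulVec_apply,
      smul_eq_mul, Finset.sum_mul]
    rw [Finset.sum_comm]
    refine Finset.sum_congr rfl fun i _ => ?_
    simp only [Finset.mul_sum, Finset.sum_mul]
    refine Finset.sum_congr rfl fun k _ => by ring
  -- orthonormality as sums
  have horth' : ∀ i j, (∑ k, u i k * u j k) = if i = j then (1:ℝ) else 0 := by
    intro i j; exact horth i j
  -- UᵀU = 1 :  ∑ i, u i j * u i k = δ j k
  have hUtU : ∀ j k, (∑ i, u i j * u i k) = if j = k then (1:ℝ) else 0 := by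
    intro j k
    set U : Matrix (Fin n) (Fin n) ℝ := Matrix.of u with hU
    have h1 : U * Uᵀ = 1 := by
      ext a b
      rw [Matrix.mul_apply]
      simp only [Matrix.transpose_apply, hU, Matrix.of_apply, Matrix.one_apply]
      rw [← horth' a b]
    have h2 : Uᵀ * U = 1 := mul_eq_one_comm.mp h1
    have := congrFun (congrFun h2 j) k
    simpa [hU, Matrix.mul_apply, Matrix.transpose_apply, Matrix.one_apply] using this
  -- Parseval
  have hpars : (∑ i, (u i ⬝ᵥ w)^2) = ∑ j, (w j)^2 := by
    calc (∑ i, (u i ⬝ᵥ w)^2)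
        = ∑ i, ∑ j, ∑ k, (w j * w k) * (u i j * u i k) := by
          refine Finset.sum_congr rfl fun i _ => ?_
          rw [sq, dotProduct, Finset.sum_mul_sum]
          refine Finset.sum_congr rfl fun j _ => Finset.sum_congr rfl fun k _ => by ring
      _ = ∑ j, ∑ k, (w j * w k) * ∑ i, (u i j * u i k) := by
          rw [Finset.sum_comm]
          refine Finset.sum_congr rfl fun j _ => ?_
          rw [Finset.sum_comm]
          refine Finset.sum_congr rfl fun k _ => ?_
          rw [Finset.mul_sum]
      _ = ∑ j, (w j)^2 := by
          refine Finset.sum_congr rfl fun j _ => ?_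
          simp [hUtU, sq]
  -- ∑ y² = ∑_{i∈s} (c i)² ⟨u i, w⟩²
  have hysq : (∑ j, (y j)^2) = ∑ i ∈ s, (c i)^2 * (u i ⬝ᵥ w)^2 := by
    calc (∑ j, (y j)^2)
        = ∑ j, ∑ i ∈ s, ∑ i' ∈ s, ((c i * (u i ⬝ᵥ w)) * (c i' * (u i' ⬝ᵥ w))) * (u i j * u i' j) := by
          refine Finset.sum_congr rfl fun j _ => ?_
          rw [hyj, sq, Finset.sum_mul_sum]
          refine Finset.sum_congr rfl fun i _ => Finset.sum_congr rfl fun i' _ => by ring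
      _ = ∑ i ∈ s, ∑ i' ∈ s, ((c i * (u i ⬝ᵥ w)) * (c i' * (u i' ⬝ᵥ w))) * ∑ j, (u i j * u i' j) := by
          rw [Finset.sum_comm]
          refine Finset.sum_congr rfl fun i _ => ?_
          rw [Finset.sum_comm]
          refine Finset.sum_congr rfl fun i' _ => ?_
          rw [Finset.mul_sum]
      _ = ∑ i ∈ s, (c i)^2 * (u i ⬝ᵥ w)^2 := by
          refine Finset.sum_congr rfl fun i hi => ?_
          rw [Finset.sum_eq_single i]
          · simp [horth' i i]; ring
          · intro i' _ hne
            rw [horth' i i']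
            simp [(Ne.symm hne)]
          · intro h; exact absurd hi h
  -- bound ∑ y² ≤ M² ∑ w²
  have hybd : (∑ j, (y j)^2) ≤ M^2 * ∑ j, (w j)^2 := by
    rw [hysq]
    calc (∑ i ∈ s, (c i)^2 * (u i ⬝ᵥ w)^2)
        ≤ ∑ i ∈ s, M^2 * (u i ⬝ᵥ w)^2 := by
          refine Finset.sum_le_sum fun i hi => ?_
          have hiM : |c i| ≤ M := by
            refine hM.2 ⟨i, ?_, rfl⟩
            exact Finset.ne_of_mem_erase hi
          have : (c i)^2 ≤ M^2 := by
            rw [← sq_abs (c i)]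
            exact pow_le_pow_left₀ (abs_nonneg _) hiM 2
          nlinarith [sq_nonneg (u i ⬝ᵥ w)]
      _ ≤ ∑ i, M^2 * (u i ⬝ᵥ w)^2 := by
          refine Finset.sum_le_sum_of_subset_of_nonneg (Finset.erase_subset _ _) ?_
          intro i _ _; positivity
      _ = M^2 * ∑ j, (w j)^2 := by rw [← hpars, Finset.mul_sum]
  -- bound ∑ w² ≤ (1/dmin) ∑ v²
  have hwbd : (∑ j, (w j)^2) ≤ dmin⁻¹ * ∑ j, (v j)^2 := by
    rw [Finset.mul_sum]
    refine Finset.sum_le_sum fun j _ => ?_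
    rw [hwj]
    have hdj : dmin ≤ d j := hdmin.2 ⟨j, rfl⟩
    have hsq : ((Real.sqrt (d j))⁻¹)^2 = (d j)⁻¹ := by
      rw [← Real.sqrt_inv, Real.sq_sqrt (inv_nonneg.mpr (hdpos j).le)]
    rw [mul_pow, hsq]
    have : (d j)⁻¹ ≤ dmin⁻¹ := by
      apply inv_anti₀ hdminpos hdj
    nlinarith [sq_nonneg (v j)]
  -- bound ∑ ε² ≤ (1-α)² dmax M² /dmin ∑ v²
  have hεbd : (∑ i, (ε i)^2) ≤ (1-α)^2 * dmax * (M^2 * (dmin⁻¹ * ∑ j, (v j)^2)) := by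
    calc (∑ i, (ε i)^2) = ∑ i, (1-α)^2 * (d i * (y i)^2) := by
          refine Finset.sum_congr rfl fun i _ => ?_
          rw [hεi i]
          rw [mul_pow, mul_pow, Real.sq_sqrt (hdpos i).le]
      _ ≤ ∑ i, (1-α)^2 * (dmax * (y i)^2) := by
          refine Finset.sum_le_sum fun i _ => ?_
          have hd : d i ≤ dmax := hdmax.2 ⟨i, rfl⟩
          exact mul_le_mul_of_nonneg_left
            (mul_le_mul_of_nonneg_right hd (sq_nonneg (y i))) (sq_nonneg (1-α))
      _ = (1-α)^2 * dmax * ∑ i, (y i)^2 := by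
          rw [← Finset.mul_sum]; rw [Finset.mul_sum, Finset.mul_sum]
          refine Finset.sum_congr rfl fun i _ => by ring
      _ ≤ (1-α)^2 * dmax * (M^2 * ∑ j, (w j)^2) :=
          mul_le_mul_of_nonneg_left hybd (by positivity)
      _ ≤ (1-α)^2 * dmax * (M^2 * (dmin⁻¹ * ∑ j, (v j)^2)) :=
          mul_le_mul_of_nonneg_left
            (mul_le_mul_of_nonneg_left hwbd (sq_nonneg M)) (by positivity)
  -- l1 ≤ √n l2
  have hl1 : (∑ i, |ε i|) ≤ Real.sqrt n * Real.sqrt (∑ i, (ε i)^2) := by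
    have hCS : (∑ i, 1 * |ε i|)^2 ≤ (∑ i : Fin n, (1:ℝ)^2) * (∑ i, |ε i|^2) :=
      Finset.sum_mul_sq_le_sq_mul_sq Finset.univ (fun _ => 1) (fun i => |ε i|)
    simp only [one_mul, one_pow, Finset.sum_const, Finset.card_univ, Fintype.card_fin,
      nsmul_eq_mul, sq_abs] at hCS
    have h0 : (0:ℝ) ≤ ∑ i, |ε i| := Finset.sum_nonneg fun i _ => abs_nonneg _
    calc (∑ i, |ε i|) = Real.sqrt ((∑ i, |ε i|)^2) := (Real.sqrt_sq h0).symm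
      _ ≤ Real.sqrt ((n:ℝ) * ∑ i, (ε i)^2) := Real.sqrt_le_sqrt (by linarith [hCS])
      _ = Real.sqrt n * Real.sqrt (∑ i, (ε i)^2) := Real.sqrt_mul (Nat.cast_nonneg n) _
  -- combine
  set R : ℝ := (1-α) * Real.sqrt (dmax/dmin) * M * Real.sqrt (∑ i, (v i)^2) with hR
  have hRnn : 0 ≤ R := by positivity
  have hεR : Real.sqrt (∑ i, (ε i)^2) ≤ R := by
    have hR2 : R^2 = (1-α)^2 * dmax * (M^2 * (dmin⁻¹ * ∑ j, (v j)^2)) := by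
      rw [hR]
      have h1 : (Real.sqrt (dmax/dmin))^2 = dmax/dmin := Real.sq_sqrt (by positivity)
      have h2 : (Real.sqrt (∑ i, (v i)^2))^2 = ∑ i, (v i)^2 :=
        Real.sq_sqrt (Finset.sum_nonneg fun i _ => sq_nonneg _)
      rw [mul_pow, mul_pow, mul_pow, h1, h2, div_eq_mul_inv]
      ring
    calc Real.sqrt (∑ i, (ε i)^2) ≤ Real.sqrt (R^2) := by
          rw [hR2]; exact Real.sqrt_le_sqrt hεbd
      _ = R := Real.sqrt_sq hRnn
  calc (∑ i, |ε i|) ≤ Real.sqrt n * Real.sqrt (∑ i, (ε i)^2) := hl1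
    _ ≤ Real.sqrt n * R := by
        exact mul_le_mul_of_nonneg_left hεR (Real.sqrt_nonneg _)
    _ = (1 - α) * Real.sqrt n * Real.sqrt (dmax / dmin) * M * Real.sqrt (∑ i, (v i)^2) := by
        rw [hR]; ring
end

section
/- For the two-community SBM mean matrix with equal communities: let u ∈ ℝⁿ with uᵢ = 1/√n for i in C₁ and uᵢ = -1/√n for i in C₂ (|C₁| = |C₂| = n/2), and β = (p-q)/(p+q) with p > q > 0. Then the mean transition matrix P̄ = (1/n)𝟙𝟙ᵀ + β uuᵀ satisfies: the equation π̄ = αP̄π̄ + (1-α)v with probability vector v has the unique solution π̄ = (α/n)𝟙 + (1-α)(v + (αβ/(1-αβ))(uᵀv)u). -/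
open Matrix Finset

/-!
Since `𝟙 ⬝ᵥ u = 0`, the fixed-point equation can be solved one rank-one term of `P̄` at a time
by the Sherman–Morrison identity for `x = c (w ⬝ᵥ x) w + b`: first the `β u uᵀ` term, where
`u ⬝ᵥ u = 1` produces the factor `αβ / (1 - αβ)`; then the `(1/n) 𝟙 𝟙ᵀ` term, whose contribution
collapses to `(α / n) 𝟙` because `𝟙 ⬝ᵥ v = 1`.
-/

section RankOne

variable {K ι : Type*} [Field K] [Fintype ι]

theorem eq_smul_dotProduct_smul_add_iff {c : K} {w x b : ι → K} (h : c * (w ⬝ᵥ w) ≠ 1) :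
    x = c • (w ⬝ᵥ x) • w + b ↔ x = b + (c / (1 - c * (w ⬝ᵥ w))) • (w ⬝ᵥ b) • w := by
  have hd : 1 - c * (w ⬝ᵥ w) ≠ 0 := sub_ne_zero.mpr h.symm
  -- in both directions, dotting with `w` pins down `w ⬝ᵥ x`
  have key : w ⬝ᵥ x = (w ⬝ᵥ b) / (1 - c * (w ⬝ᵥ w)) →
      c • (w ⬝ᵥ x) • w + b = b + (c / (1 - c * (w ⬝ᵥ w))) • (w ⬝ᵥ b) • w := by
    intro hwx
    rw [hwx, smul_smul, smul_smul, add_comm, mul_div_assoc', div_mul_eq_mul_div]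
  constructor
  · intro hx
    refine hx.trans (key ?_)
    rw [eq_div_iff hd]
    have hwx := congrArg (w ⬝ᵥ ·) hx
    simp only [dotProduct_add, dotProduct_smul, smul_eq_mul] at hwx
    linear_combination hwx
  · intro hx
    refine hx.trans (key ?_).symm
    rw [hx]
    simp only [dotProduct_add, dotProduct_smul, smul_eq_mul]
    field_simp
    ring

end RankOne

section SignVector

variable {R ι : Type*} [CommRing R] [Fintype ι] [DecidableEq ι]

theorem sum_ite_mem_neg_eq_zero {C₁ C₂ : Finset ι} (hdisj : Disjoint C₁ C₂)
    (hunion : C₁ ∪ C₂ = univ) (hcard : #C₁ = #C₂) (a : R) :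
    ∑ i, (if i ∈ C₁ then a else -a) = 0 := by
  rw [← hunion, sum_union hdisj, sum_ite_of_true fun _ => id,
    sum_ite_of_false fun _ hi => disjoint_right.mp hdisj hi]
  simp [hcard]

theorem dotProduct_self_ite_mem_neg (C : Finset ι) (a : R) :
    (fun i => if i ∈ C then a else -a) ⬝ᵥ (fun i => if i ∈ C then a else -a) =
      Fintype.card ι * a ^ 2 := by
  simp [dotProduct, apply_ite₂ (· * ·), ← sq, card_univ]

end SignVector

theorem mulVec_smul_vecMulVec_add_smul_vecMulVec {R ι : Type*} [CommRing R] [Fintype ι]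
    (a b : R) (w z x : ι → R) :
    (a • vecMulVec w w + b • vecMulVec z z) *ᵥ x = (a * (w ⬝ᵥ x)) • w + (b * (z ⬝ᵥ x)) • z := by
  simp [add_mulVec, smul_mulVec, vecMulVec_mulVec, smul_smul]

theorem sbm_mean_pagerank_general {n : ℕ}
    (C₁ C₂ : Finset (Fin n)) (hdisj : Disjoint C₁ C₂)
    (hunion : C₁ ∪ C₂ = Finset.univ)
    (hcard₁ : C₁.card = n / 2) (hcard₂ : C₂.card = n / 2) (hn0 : 0 < n)
    (p q : ℝ) (hq : 0 < q) (hpq : q < p)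
    (u : Fin n → ℝ)
    (hu : u = fun i => if i ∈ C₁ then (Real.sqrt n)⁻¹ else -(Real.sqrt n)⁻¹)
    (β : ℝ) (hβ : β = (p - q) / (p + q))
    (α : ℝ) (hα1 : α < 1)
    (v : Fin n → ℝ) (hvsum : ∑ i, v i = 1)
    (Pbar : Matrix (Fin n) (Fin n) ℝ)
    (hPbar : Pbar = (n : ℝ)⁻¹ • vecMulVec (fun _ => 1) (fun _ => 1) + β • vecMulVec u u) :
    ∀ πbar : Fin n → ℝ,
      πbar = α • Pbar.mulVec πbar + (1 - α) • v ↔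
      πbar = (α / n) • (fun _ => (1 : ℝ)) +
        (1 - α) • (v + (α * β / (1 - α * β)) • (dotProduct u v) • u) := by
  intro π
  have hn : (n : ℝ) ≠ 0 := by positivity
  have hαβ : α * β ≠ 1 := by
    have hβ₀ : 0 < β := hβ ▸ div_pos (by linarith) (by linarith)
    have hβ₁ : β < 1 := hβ ▸ (div_lt_one (by linarith)).mpr (by linarith)
    nlinarith
  have hu_sum : ∑ i, u i = 0 :=
    hu ▸ sum_ite_mem_neg_eq_zero hdisj hunion (hcard₁.trans hcard₂.symm) _
  have hu_norm : u ⬝ᵥ u = 1 := by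
    rw [hu, dotProduct_self_ite_mem_neg, Fintype.card_fin, inv_pow,
      Real.sq_sqrt (Nat.cast_nonneg n), mul_inv_cancel₀ hn]
  set b₁ := (α / n * (1 ⬝ᵥ π)) • (1 : Fin n → ℝ) + (1 - α) • v
  set b₂ := (1 - α) • v + ((1 - α) * (α * β / (1 - α * β)) * (u ⬝ᵥ v)) • u
  calc π = α • Pbar *ᵥ π + (1 - α) • v
      ↔ π = (α * β) • (u ⬝ᵥ π) • u + b₁ := by
        rw [hPbar, mulVec_smul_vecMulVec_add_smul_vecMulVec, ← Pi.one_def]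
        congr! 1
        module
    _ ↔ π = b₁ + (α * β / (1 - α * β)) • (u ⬝ᵥ b₁) • u := by
        rw [eq_smul_dotProduct_smul_add_iff (by rwa [hu_norm, mul_one]), hu_norm, mul_one]
    _ ↔ π = (α / n) • (1 ⬝ᵥ π) • 1 + b₂ := by
        rw [dotProduct_add, dotProduct_smul, dotProduct_smul, dotProduct_one, hu_sum]
        congr! 1
        module
    _ ↔ π = b₂ + (α / n / (1 - α / n * (1 ⬝ᵥ 1))) • (1 ⬝ᵥ b₂) • 1 :=
        eq_smul_dotProduct_smul_add_iff (by
          rw [one_dotProduct_one, Fintype.card_fin, div_mul_cancel₀ _ hn]; exact hα1.ne)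
    _ ↔ _ := by
        have h1b₂ : 1 ⬝ᵥ b₂ = 1 - α := by
          simp [b₂, one_dotProduct, hu_sum, hvsum]
        have hα : α / n / (1 - α / n * ((1 : Fin n → ℝ) ⬝ᵥ 1)) * (1 - α) = α / n := by
          rw [one_dotProduct_one, Fintype.card_fin, div_mul_cancel₀ _ hn,
            div_mul_cancel₀ _ (sub_ne_zero.mpr hα1.ne')]
        rw [h1b₂, smul_smul, hα, ← Pi.one_def]
        congr! 1
        module

theorem sbm_mean_pagerank {n : ℕ}
    (C₁ C₂ : Finset (Fin n)) (hdisj : Disjoint C₁ C₂)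
    (hunion : C₁ ∪ C₂ = Finset.univ)
    (hcard₁ : C₁.card = n / 2) (hcard₂ : C₂.card = n / 2) (hn : Even n) (hn0 : 0 < n)
    (p q : ℝ) (hq : 0 < q) (hpq : q < p) (hp : p ≤ 1)
    (u : Fin n → ℝ)
    (hu : u = fun i => if i ∈ C₁ then (Real.sqrt n)⁻¹ else -(Real.sqrt n)⁻¹)
    (β : ℝ) (hβ : β = (p - q) / (p + q))
    (α : ℝ) (hα0 : 0 < α) (hα1 : α < 1)
    (v : Fin n → ℝ) (hvnn : ∀ i, 0 ≤ v i) (hvsum : ∑ i, v i = 1)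
    (Pbar : Matrix (Fin n) (Fin n) ℝ)
    (hPbar : Pbar = (n : ℝ)⁻¹ • vecMulVec (fun _ => 1) (fun _ => 1) + β • vecMulVec u u) :
    ∀ πbar : Fin n → ℝ,
      πbar = α • Pbar.mulVec πbar + (1 - α) • v ↔
      πbar = (α / n) • (fun _ => (1 : ℝ)) +
        (1 - α) • (v + (α * β / (1 - α * β)) • (dotProduct u v) • u) :=
  sbm_mean_pagerank_general C₁ C₂ hdisj hunion hcard₁ hcard₂ hn0 p q hq hpq u hu β hβ α hα1 v hvsum
    Pbar hPbar
end
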